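/- arXiv:2602.23878 — 8 statements merged into one kernel-verified Lean document; each statement's English description precedes it below -/
import Mathlib

section
/- Let n be a positive natural number and let v : Fin n → ℝ be such that v i > 0 for every i. Let m denote the minimum of the values v i over all i. Then the function ν ↦ (∑_i (v i) * Real.exp (−ν * (v i − m)/m)) / (∑_i Real.exp (−ν * (v i − m)/m)) tends to m as ν tends to +∞ (along Filter.atTop). -/
open Filter

/-- STL n-ary conjunction converges to the minimum as the parameter ν → ∞. -/
theorem stl_and_tendsto_min (n : ℕ) (hn : 0 < n) (v : Fin n → ℝ)
    (hv : ∀ i, 0 < v i) (m : ℝ) (hm : m = ⨅ i, v i) :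
    Tendsto
      (fun ν : ℝ =>
        (∑ i, v i * Real.exp (-ν * (v i - m) / m)) /
          (∑ i, Real.exp (-ν * (v i - m) / m)))
      atTop (nhds m) := by
  have : Nonempty (Fin n) := ⟨⟨0, hn⟩⟩
  -- m ≤ v i
  have hle : ∀ i, m ≤ v i := by
    intro i
    rw [hm]
    exact ciInf_le (Set.Finite.bddBelow (Set.finite_range v)) i
  -- ∃ i, v i = m
  obtain ⟨i₀, hi₀⟩ := Finite.exists_min v
  have hmi₀ : v i₀ = m := le_antisymm (by rw [hm]; exact le_ciInf hi₀) (hle i₀)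
  have hmpos : 0 < m := hmi₀ ▸ hv i₀
  set c : Fin n → ℝ := fun i => if v i = m then 1 else 0 with hc
  have hterm : ∀ i, Tendsto (fun ν : ℝ => Real.exp (-ν * (v i - m) / m)) atTop (nhds (c i)) := by
    intro i
    by_cases h : v i = m
    · simp [hc, h]
    · have hd : 0 < (v i - m) / m := div_pos (sub_pos.2 (lt_of_le_of_ne (hle i) (Ne.symm h))) hmpos
      have : Tendsto (fun ν : ℝ => -ν * (v i - m) / m) atTop atBot := by
        have h1 : Tendsto (fun ν : ℝ => ν * ((v i - m) / m)) atTop atTop :=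
          Tendsto.atTop_mul_const hd tendsto_id
        have h2 := tendsto_neg_atTop_atBot.comp h1
        refine h2.congr fun ν => by simp [Function.comp]; ring
      simp only [hc, if_neg h]
      exact Real.tendsto_exp_atBot.comp this
  have hsumc : 0 < ∑ i, c i := by
    have : ∀ i, 0 ≤ c i := fun i => by simp [hc]; split <;> norm_num
    refine Finset.sum_pos' (fun i _ => this i) ⟨i₀, Finset.mem_univ _, by simp [hc, hmi₀]⟩
  have hnum : Tendsto (fun ν : ℝ => ∑ i, v i * Real.exp (-ν * (v i - m) / m)) atTop
      (nhds (∑ i, v i * c i)) :=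
    tendsto_finset_sum _ fun i _ => (hterm i).const_mul (v i)
  have hden : Tendsto (fun ν : ℝ => ∑ i, Real.exp (-ν * (v i - m) / m)) atTop
      (nhds (∑ i, c i)) :=
    tendsto_finset_sum _ fun i _ => hterm i
  have hvc : ∑ i, v i * c i = m * ∑ i, c i := by
    rw [Finset.mul_sum]
    refine Finset.sum_congr rfl fun i _ => ?_
    by_cases h : v i = m <;> simp [hc, h]
  have := hnum.div hden hsumc.ne'
  rwa [hvc, mul_div_assoc, div_self hsumc.ne', mul_one] at this
end

section
/- For every real p > 0, every real ν > 0, and every natural number M ≥ 1, the function h ↦ h⁻¹ * ( (p + h) * ((M : ℝ) * Real.exp (−h/(p+h)) * Real.exp (−ν*h/(p+h)) + 1) / ((M : ℝ) * Real.exp (−ν*h/(p+h)) + 1) − p ) tends to 1/(M+1) as h tends to 0 from the left (i.e. along the filter 𝓝[<] 0). -/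
open Filter Real

/-
The expression is the difference quotient at `0` of `g h = (p + h) * F (u h)`, where
`u h = -h / (p + h)` and `F x = (M e^x e^(ν x) + 1) / (M e^(ν x) + 1)`, and `g 0 = p`.
Since `F 0 = 1`, `F' 0 = M / (M + 1)` and `u' 0 = -1 / p`, the product and chain rules give
`g' 0 = 1 - M / (M + 1) = 1 / (M + 1)`.
-/

lemma hasDerivAt_neg_div_const_add_zero {p : ℝ} (hp : p ≠ 0) :
    HasDerivAt (fun h : ℝ => -h / (p + h)) (-1 / p) 0 := by
  have hden : HasDerivAt (fun h : ℝ => p + h) 1 0 := (hasDerivAt_id' 0).const_add p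
  refine ((hasDerivAt_id' 0).neg.div hden (by simpa using hp)).congr_deriv ?_
  simp only [add_zero, neg_zero]
  field_simp
  ring

lemma hasDerivAt_exp_ratio_zero {M : ℝ} (ν : ℝ) (hM : M + 1 ≠ 0) :
    HasDerivAt (fun x : ℝ => (M * exp x * exp (ν * x) + 1) / (M * exp (ν * x) + 1))
      (M / (M + 1)) 0 := by
  have hexp : HasDerivAt (fun x : ℝ => exp (ν * x)) ν 0 := by
    simpa using ((hasDerivAt_id' 0).const_mul ν).exp
  have hnum := (((hasDerivAt_exp 0).const_mul M).mul hexp).add_const 1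
  have hden := (hexp.const_mul M).add_const 1
  refine (hnum.div hden (by simpa using hM)).congr_deriv ?_
  simp only [Pi.mul_apply, mul_zero, exp_zero]
  field_simp
  ring

theorem stl_and_lt0_shadow_lifting_at_left_general (p ν : ℝ) (hp : 0 < p)
    (M : ℕ) :
    Tendsto
      (fun h : ℝ =>
        h⁻¹ *
          ((p + h) *
              ((M : ℝ) * Real.exp (-h / (p + h)) * Real.exp (-ν * h / (p + h)) + 1) /
              ((M : ℝ) * Real.exp (-ν * h / (p + h)) + 1) - p))
      (nhdsWithin 0 (Set.Iio 0)) (nhds (1 / ((M : ℝ) + 1))) := by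
  have hM : (M : ℝ) + 1 ≠ 0 := by positivity
  have hF := (hasDerivAt_exp_ratio_zero ν hM).comp_of_eq 0
    (hasDerivAt_neg_div_const_add_zero hp.ne') (by simp)
  have hg := (((hasDerivAt_id' 0).const_add p).mul hF).congr_deriv (g' := 1 / ((M : ℝ) + 1))
    (by
      simp only [Function.comp_apply, neg_zero, add_zero, zero_div, exp_zero, mul_one, mul_zero,
        one_mul]
      field_simp
      ring)
  convert hg.tendsto_slope_zero_left using 2 with h
  simp only [Pi.mul_apply, Function.comp_apply, zero_add, smul_eq_mul, neg_zero, zero_div,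
    mul_zero, exp_zero, add_zero, mul_one, div_self hM, mul_div_assoc, neg_mul, mul_neg, neg_div]

/-- "From below" one-sided limit in the proof of shadow-lifting for the STL
conjunction (case `p_min < 0`). -/
theorem stl_and_lt0_shadow_lifting_at_left (p ν : ℝ) (hp : 0 < p) (hν : 0 < ν)
    (M : ℕ) (hM : 1 ≤ M) :
    Tendsto
      (fun h : ℝ =>
        h⁻¹ *
          ((p + h) *
              ((M : ℝ) * Real.exp (-h / (p + h)) * Real.exp (-ν * h / (p + h)) + 1) /
              ((M : ℝ) * Real.exp (-ν * h / (p + h)) + 1) - p))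
      (nhdsWithin 0 (Set.Iio 0)) (nhds (1 / ((M : ℝ) + 1))) :=
  stl_and_lt0_shadow_lifting_at_left_general p ν hp M
end

section
/- For every real p > 0, every real ν > 0, and every natural number M ≥ 1, the function h ↦ h⁻¹ * ( p * ((M : ℝ) + Real.exp (h/p) * Real.exp (ν*h/p)) / ((M : ℝ) + Real.exp (ν*h/p)) − p ) tends to 1/(M+1) as h tends to 0 from the right (i.e. along the filter 𝓝[>] 0). -/
/-!
The quotient is the right difference quotient at `0` of `h ↦ stlAndOnePerturbed p ν M h`,
which equals `p` at `0`. By the quotient rule its derivative there is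
`((1 + ν)(M + 1) - p (M + 1) (ν / p)) / (M + 1)² = 1 / (M + 1)`.
-/

open Filter Real

/-- The negative-minimum branch of the STL conjunction with parameter `ν`, evaluated at `M`
arguments equal to `p` and one argument equal to `p + h`. -/
noncomputable def stlAndOnePerturbed (p ν M h : ℝ) : ℝ :=
  p * (M + exp (h / p) * exp (ν * h / p)) / (M + exp (ν * h / p))

theorem stlAndOnePerturbed_zero (p ν : ℝ) {M : ℝ} (hM : M + 1 ≠ 0) :
    stlAndOnePerturbed p ν M 0 = p := by
  simp [stlAndOnePerturbed, hM]

theorem hasDerivAt_stlAndOnePerturbed_zero {p : ℝ} (ν : ℝ) {M : ℝ} (hp : p ≠ 0)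
    (hM : M + 1 ≠ 0) : HasDerivAt (stlAndOnePerturbed p ν M) (1 / (M + 1)) 0 := by
  have hw : HasDerivAt (fun h => exp (ν * h / p)) (ν / p) 0 := by
    simpa using ((hasDerivAt_id 0).const_mul ν |>.div_const p).exp
  have hu : HasDerivAt (fun h => exp (h / p)) (1 / p) 0 := by
    simpa using ((hasDerivAt_id 0).div_const p).exp
  have hnum := ((hu.fun_mul hw).const_add M).const_mul p
  refine (hnum.fun_div (hw.const_add M) (by simpa using hM)).congr_deriv ?_
  simp only [mul_zero, zero_div, exp_zero, mul_one, one_mul]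
  field_simp
  ring

theorem stl_and_lt0_shadow_lifting_at_right_general (p ν : ℝ) (hp : 0 < p)
    (M : ℕ) :
    Tendsto
      (fun h : ℝ =>
        h⁻¹ *
          (p * ((M : ℝ) + Real.exp (h / p) * Real.exp (ν * h / p)) /
              ((M : ℝ) + Real.exp (ν * h / p)) - p))
      (nhdsWithin 0 (Set.Ioi 0)) (nhds (1 / ((M : ℝ) + 1))) := by
  have hM : (M : ℝ) + 1 ≠ 0 := by positivity
  have hslope := (hasDerivAt_stlAndOnePerturbed_zero ν hp.ne' hM).tendsto_slope_zero_right
  rw [stlAndOnePerturbed_zero p ν hM] at hslope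
  simpa only [stlAndOnePerturbed, zero_add, smul_eq_mul] using hslope

/-- "From above" one-sided limit in the proof of shadow-lifting for the STL
conjunction (case `p_min < 0`). -/
theorem stl_and_lt0_shadow_lifting_at_right (p ν : ℝ) (hp : 0 < p) (hν : 0 < ν)
    (M : ℕ) (hM : 1 ≤ M) :
    Tendsto
      (fun h : ℝ =>
        h⁻¹ *
          (p * ((M : ℝ) + Real.exp (h / p) * Real.exp (ν * h / p)) /
              ((M : ℝ) + Real.exp (ν * h / p)) - p))
      (nhdsWithin 0 (Set.Ioi 0)) (nhds (1 / ((M : ℝ) + 1))) :=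
  stl_and_lt0_shadow_lifting_at_right_general p ν hp M
end

section
/- Let r be a real number with r > 0. For all real numbers x, y, z in the closed interval [0,1], the inequality max (1 − ((1−x)^r + (1−y)^r)^(1/r)) 0 ≤ z holds if and only if y ≤ (if x ≤ z then 1 else 1 − ((1−z)^r − (1−x)^r)^(1/r)), where a^b denotes the real power Real.rpow a b. -/
/-- Residuation (R10) for Yager logic with parameter `r > 0`.
Powers are real powers (`Real.rpow`). -/
theorem yager_residuation (r : ℝ) (hr : 0 < r) (x y z : ℝ)
    (hx : x ∈ Set.Icc (0 : ℝ) 1) (hy : y ∈ Set.Icc (0 : ℝ) 1)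
    (hz : z ∈ Set.Icc (0 : ℝ) 1) :
    max (1 - ((1 - x) ^ r + (1 - y) ^ r) ^ (1 / r)) 0 ≤ z ↔
      y ≤ (if x ≤ z then 1 else 1 - ((1 - z) ^ r - (1 - x) ^ r) ^ (1 / r)) := by
  obtain ⟨hx0, hx1⟩ := hx
  obtain ⟨hy0, hy1⟩ := hy
  obtain ⟨hz0, hz1⟩ := hz
  have ha : (0:ℝ) ≤ 1 - x := by linarith
  have hb : (0:ℝ) ≤ 1 - y := by linarith
  have hc : (0:ℝ) ≤ 1 - z := by linarith
  have hS : 0 ≤ (1 - x) ^ r + (1 - y) ^ r :=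
    add_nonneg (Real.rpow_nonneg ha r) (Real.rpow_nonneg hb r)
  rw [max_le_iff]
  simp only [one_div, hz0, and_true]
  have key : 1 - ((1 - x) ^ r + (1 - y) ^ r) ^ r⁻¹ ≤ z ↔
      (1 - z) ^ r ≤ (1 - x) ^ r + (1 - y) ^ r := by
    rw [show (1 - ((1 - x) ^ r + (1 - y) ^ r) ^ r⁻¹ ≤ z) ↔
        (1 - z ≤ ((1 - x) ^ r + (1 - y) ^ r) ^ r⁻¹) from ⟨fun h => by linarith, fun h => by linarith⟩,
      Real.le_rpow_inv_iff_of_pos hc hS hr]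
  rw [key]
  split_ifs with h
  · constructor
    · intro _; exact hy1
    · intro _
      have h1 : (1 - z) ^ r ≤ (1 - x) ^ r := Real.rpow_le_rpow hc (by linarith) hr.le
      have h2 : 0 ≤ (1 - y) ^ r := Real.rpow_nonneg hb r
      linarith
  · have hdiff : 0 ≤ (1 - z) ^ r - (1 - x) ^ r := by
      have : (1 - x) ^ r ≤ (1 - z) ^ r := Real.rpow_le_rpow ha (by linarith) hr.le
      linarith
    rw [show (y ≤ 1 - ((1 - z) ^ r - (1 - x) ^ r) ^ r⁻¹) ↔
        (((1 - z) ^ r - (1 - x) ^ r) ^ r⁻¹ ≤ 1 - y) from ⟨fun h => by linarith, fun h => by linarith⟩,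
      Real.rpow_inv_le_iff_of_pos hdiff hb hr]
    constructor <;> intro <;> linarith
end

section
/- Let r be a real number with r > 0 and define T : ℝ → ℝ → ℝ by T x y = max (1 − ((1−x)^r + (1−y)^r)^(1/r)) 0, where a^b denotes the real power Real.rpow a b. Then T is associative on [0,1]: for all x, y, z in the closed interval [0,1], T (T x y) z = T x (T y z). -/
/-- The Yager t-norm with parameter `r`, powers being real powers (`Real.rpow`). -/
noncomputable def yagerTnorm (r : ℝ) (x y : ℝ) : ℝ :=
  max (1 - ((1 - x) ^ r + (1 - y) ^ r) ^ (1 / r)) 0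

lemma yager_key (r : ℝ) (hr : 0 < r) (x y : ℝ) (hx : x ∈ Set.Icc (0 : ℝ) 1)
    (hy : y ∈ Set.Icc (0 : ℝ) 1) :
    (1 - yagerTnorm r x y) ^ r = min ((1 - x) ^ r + (1 - y) ^ r) 1 := by
  set a := (1 - x) ^ r with ha'
  set b := (1 - y) ^ r with hb'
  have ha : 0 ≤ a := Real.rpow_nonneg (by linarith [hx.2]) r
  have hb : 0 ≤ b := Real.rpow_nonneg (by linarith [hy.2]) r
  set s := (a + b) ^ (1 / r) with hs'
  have hs : 0 ≤ s := Real.rpow_nonneg (by linarith) _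
  have hsr : s ^ r = a + b := by
    rw [hs', one_div, Real.rpow_inv_rpow (by linarith) hr.ne']
  have hT : 1 - yagerTnorm r x y = min s 1 := by
    rw [yagerTnorm]
    rcases le_total s 1 with h | h
    · rw [max_eq_left (by linarith), min_eq_left h]; ring
    · rw [max_eq_right (by linarith), min_eq_right h]; ring
  rw [hT]
  rcases le_total s 1 with h | h
  · rw [min_eq_left h, hsr, min_eq_left]
    calc a + b = s ^ r := hsr.symm
      _ ≤ 1 := Real.rpow_le_one hs h hr.le
  · rw [min_eq_right h, Real.one_rpow, min_eq_right]
    calc (1 : ℝ) ≤ s ^ r := Real.one_le_rpow h hr.le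
      _ = a + b := hsr

lemma yager_zero (r : ℝ) (hr : 0 < r) {u : ℝ} (h : 1 ≤ u) :
    max (1 - u ^ (1 / r)) 0 = 0 := by
  have : (1 : ℝ) ≤ u ^ (1 / r) := Real.one_le_rpow h (by positivity)
  exact max_eq_right (by linarith)

/-- Associativity (R8) of the Yager t-norm on `[0,1]`, for `r > 0`. -/
theorem yagerTnorm_assoc (r : ℝ) (hr : 0 < r) (x y z : ℝ)
    (hx : x ∈ Set.Icc (0 : ℝ) 1) (hy : y ∈ Set.Icc (0 : ℝ) 1)
    (hz : z ∈ Set.Icc (0 : ℝ) 1) :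
    yagerTnorm r (yagerTnorm r x y) z = yagerTnorm r x (yagerTnorm r y z) := by
  have key1 := yager_key r hr x y hx hy
  have key2 := yager_key r hr y z hy hz
  rw [show yagerTnorm r (yagerTnorm r x y) z =
      max (1 - ((1 - yagerTnorm r x y) ^ r + (1 - z) ^ r) ^ (1 / r)) 0 from rfl,
    show yagerTnorm r x (yagerTnorm r y z) =
      max (1 - ((1 - x) ^ r + (1 - yagerTnorm r y z) ^ r) ^ (1 / r)) 0 from rfl,
    key1, key2]
  set a := (1 - x) ^ r with ha'
  set b := (1 - y) ^ r with hb'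
  set c := (1 - z) ^ r with hc'
  have ha : 0 ≤ a := Real.rpow_nonneg (by linarith [hx.2]) r
  have hb : 0 ≤ b := Real.rpow_nonneg (by linarith [hy.2]) r
  have hc : 0 ≤ c := Real.rpow_nonneg (by linarith [hz.2]) r
  rcases le_total (a + b) 1 with hab | hab
  · rcases le_total (b + c) 1 with hbc | hbc
    · rw [min_eq_left hab, min_eq_left hbc]; ring_nf
    · rw [min_eq_left hab, min_eq_right hbc,
        yager_zero r hr (by linarith : (1:ℝ) ≤ a + b + c),
        yager_zero r hr (by linarith : (1:ℝ) ≤ a + 1)]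
  · rw [min_eq_right hab, yager_zero r hr (by linarith : (1:ℝ) ≤ 1 + c)]
    rcases le_total (b + c) 1 with hbc | hbc
    · rw [min_eq_left hbc, yager_zero r hr (by linarith : (1:ℝ) ≤ a + (b + c))]
    · rw [min_eq_right hbc, yager_zero r hr (by linarith : (1:ℝ) ≤ a + 1)]
end

section
/- Let r be a real number with r > 0 and define S : ℝ → ℝ → ℝ by S x y = min ((x^r + y^r)^(1/r)) 1, where a^b denotes the real power Real.rpow a b. Then S is associative on [0,1]: for all x, y, z in the closed interval [0,1], S (S x y) z = S x (S y z). -/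
/-- The Yager t-conorm with parameter `r`, powers being real powers (`Real.rpow`). -/
noncomputable def yagerTconorm (r : ℝ) (x y : ℝ) : ℝ :=
  min ((x ^ r + y ^ r) ^ (1 / r)) 1

private lemma yager_rewrite (r : ℝ) (hr : 0 < r) (a b : ℝ) (ha : 0 ≤ a) (hb : 0 ≤ b) :
    yagerTconorm r a b = (min (a ^ r + b ^ r) 1) ^ (1 / r) := by
  have hs : (0:ℝ) ≤ a ^ r + b ^ r :=
    add_nonneg (Real.rpow_nonneg ha _) (Real.rpow_nonneg hb _)
  unfold yagerTconorm
  rcases le_total (a ^ r + b ^ r) 1 with h | h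
  · rw [min_eq_left h, min_eq_left]
    calc (a ^ r + b ^ r) ^ (1 / r) ≤ (1 : ℝ) ^ (1 / r) :=
          Real.rpow_le_rpow hs h (by positivity)
      _ = 1 := Real.one_rpow _
  · rw [min_eq_right h, min_eq_right, Real.one_rpow]
    calc (1 : ℝ) = 1 ^ (1/r) := (Real.one_rpow _).symm
      _ ≤ (a ^ r + b ^ r) ^ (1 / r) := Real.rpow_le_rpow zero_le_one h (by positivity)

/-- Associativity (M1) of the Yager t-conorm on `[0,1]`, for `r > 0`. -/
theorem yagerTconorm_assoc (r : ℝ) (hr : 0 < r) (x y z : ℝ)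
    (hx : x ∈ Set.Icc (0 : ℝ) 1) (hy : y ∈ Set.Icc (0 : ℝ) 1)
    (hz : z ∈ Set.Icc (0 : ℝ) 1) :
    yagerTconorm r (yagerTconorm r x y) z = yagerTconorm r x (yagerTconorm r y z) := by
  obtain ⟨hx0, _⟩ := hx
  obtain ⟨hy0, _⟩ := hy
  obtain ⟨hz0, _⟩ := hz
  have hx' : 0 ≤ x ^ r := Real.rpow_nonneg hx0 _
  have hy' : 0 ≤ y ^ r := Real.rpow_nonneg hy0 _
  have hz' : 0 ≤ z ^ r := Real.rpow_nonneg hz0 _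
  have hpow : ∀ s : ℝ, 0 ≤ s → (s ^ (1/r)) ^ r = s := by
    intro s hs
    rw [← Real.rpow_mul hs, one_div, inv_mul_cancel₀ hr.ne', Real.rpow_one]
  have hmxy : (0:ℝ) ≤ min (x ^ r + y ^ r) 1 := le_min (by linarith) zero_le_one
  have hmyz : (0:ℝ) ≤ min (y ^ r + z ^ r) 1 := le_min (by linarith) zero_le_one
  have hSxy : 0 ≤ yagerTconorm r x y := by
    rw [yager_rewrite r hr x y hx0 hy0]; exact Real.rpow_nonneg hmxy _
  have hSyz : 0 ≤ yagerTconorm r y z := by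
    rw [yager_rewrite r hr y z hy0 hz0]; exact Real.rpow_nonneg hmyz _
  rw [yager_rewrite r hr _ z hSxy hz0, yager_rewrite r hr x _ hx0 hSyz,
    yager_rewrite r hr x y hx0 hy0, yager_rewrite r hr y z hy0 hz0,
    hpow _ hmxy, hpow _ hmyz]
  congr 1
  rcases le_total (x ^ r + y ^ r) 1 with h | h
  · rw [min_eq_left h]
    rcases le_total (y ^ r + z ^ r) 1 with h2 | h2
    · rw [min_eq_left h2, add_assoc]
    · rw [min_eq_right h2, min_eq_right (by linarith), min_eq_right (by linarith)]
  · rw [min_eq_right h]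
    rcases le_total (y ^ r + z ^ r) 1 with h2 | h2
    · rw [min_eq_left h2, min_eq_right (by linarith), min_eq_right (by linarith)]
    · rw [min_eq_right h2, min_eq_right (by linarith), min_eq_right (by linarith)]
end

section
/- For all real numbers x, y, z with x ≤ 0, y ≤ 0 and z ≤ 0, the inequality x + y ≤ z holds if and only if y ≤ −(max (x − z) 0). -/
/-- Residuation (R10) for DL2 on the domain `(-∞, 0]`. -/
theorem dl2_residuation (x y z : ℝ) (hx : x ≤ 0) (hy : y ≤ 0) (hz : z ≤ 0) :
    x + y ≤ z ↔ y ≤ -(max (x - z) 0) := by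
  rcases le_total (x - z) 0 with h | h <;> simp [max_eq_right, max_eq_left, h] <;> constructor <;> intro <;> linarith
end

section
/- Fix a type A of atoms and a valuation val : A → ℝ with val a ≤ 0 for every a. Define DL2 formulas inductively: an atom from A; the constant ⊤; and for formulas p, q the formulas p ⊙ q, p ∧ q, p ∨ q, and p ⇒ q. Define the interpretation ⟦·⟧ : Formula → ℝ by ⟦atom a⟧ = val a, ⟦⊤⟧ = 0, ⟦p ⊙ q⟧ = ⟦p⟧ + ⟦q⟧, ⟦p ∧ q⟧ = min ⟦p⟧ ⟦q⟧, ⟦p ∨ q⟧ = max ⟦p⟧ ⟦q⟧, and ⟦p ⇒ q⟧ = −max (⟦p⟧ − ⟦q⟧) 0. A sequent is a pair (Γ, Δ) of lists of formulas; it is sound if (∑ over q ∈ Γ of ⟦q⟧) ≤ (∑ over p ∈ Δ of ⟦p⟧) (empty sums being 0). A hypersequent is a list of sequents. Define derivability of hypersequents inductively by the rules: (init) H with component ([p],[p]) appended is derivable, for any formula p; (emp) H with component ([],[]) appended is derivable; (⊤) H with component (Γ,[⊤]) appended is derivable, for any list Γ; (EW) from H derive H with any additional component S; (EC) from H with components G,G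 appended derive H with component G appended; (EEX) from a hypersequent derive any reordering of its list of components; (W) from H | (Γ,Δ) derive H | (Γ ++ Γ', Δ) for any list Γ'; (COM) from H | (Γ₁ ++ Π₁, Δ) and H | (Γ₂ ++ Π₂, Σ) derive H | (Γ₁ ++ Γ₂, Δ) | (Π₁ ++ Π₂, Σ); (LEX) and (REX) from a hypersequent derive the hypersequent obtained by transposing two adjacent formulas in the antecedent, respectively the succedent, of one component; (L⊙) from H | (Γ ++ [p, q], Δ) derive H | (Γ ++ [p ⊙ q], Δ); (R⊙) from H | (Γ₀, [p] ++ Δ₀) and H | (Γ₁, [q] ++ Δ₁) derive H | (Γ₀ ++ Γ₁, [p ⊙ q] ++ Δ₀ ++ Δ₁); (L∧) from H | (Γ ++ [p], Δ) | (Γ ++ [q], Δ) derive H | (Γ ++ [p ∧ q], Δ); (R∧) from H | (Γ, [p] ++ Δ) and H | (Γ, [q] ++ Δ) derive H | (Γ, [p ∧ q] ++ Δ); (L∨) from H | (Γ ++ [p], Δ) and H | (Γ ++ [q], Δ) derive H | (Γ ++ [p ∨ q], Δ); (R∨) from H | (Γ, [p] ++ Δ) | (Γ, [q] ++ Δ)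 derive H | (Γ, [p ∨ q] ++ Δ); (L⇒) from H | (Γ, Δ) and H | (Γ ++ [q], [p] ++ Δ) derive H | (Γ ++ [p ⇒ q], Δ); (R⇒) from H | (Γ, Δ) and H | (Γ ++ [p], [q] ++ Δ) derive H | (Γ, [p ⇒ q] ++ Δ). Theorem (Soundness of DL2): for every derivable hypersequent H, there exists a sequent in H that is sound. -/
/-- Formulas of DL2 over a type `A` of atoms. -/
inductive DL2Formula (A : Type*) : Type _ where
  | atom : A → DL2Formula A
  | top : DL2Formula A
  | mand : DL2Formula A → DL2Formula A → DL2Formula A  -- monoidal conjunction ⊙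
  | land : DL2Formula A → DL2Formula A → DL2Formula A  -- lattice conjunction ∧
  | lor : DL2Formula A → DL2Formula A → DL2Formula A   -- lattice disjunction ∨
  | imp : DL2Formula A → DL2Formula A → DL2Formula A   -- implication ⇒

namespace DL2Formula

variable {A : Type*}

/-- Interpretation of DL2 formulas, given a valuation of the atoms. -/
noncomputable def interp (val : A → ℝ) : DL2Formula A → ℝ
  | atom a => val a
  | top => 0
  | mand p q => interp val p + interp val q
  | land p q => min (interp val p) (interp val q)
  | lor p q => max (interp val p) (interp val q)
  | imp p q => -max (interp val p - interp val q) 0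

end DL2Formula

/-- A sequent is a pair of lists of formulas. -/
abbrev DL2Sequent (A : Type*) := List (DL2Formula A) × List (DL2Formula A)

/-- A sequent `Γ ⊢ Δ` is sound if the sum of the interpretations of `Γ` is at
most the sum of the interpretations of `Δ`. -/
noncomputable def DL2Sequent.Sound {A : Type*} (val : A → ℝ) (s : DL2Sequent A) : Prop :=
  (s.1.map (DL2Formula.interp val)).sum ≤ (s.2.map (DL2Formula.interp val)).sum

/-- A hypersequent is a list of sequents. -/
abbrev DL2Hypersequent (A : Type*) := List (DL2Sequent A)

open DL2Formula in
/-- Derivability in the hypersequent calculus for DL2. -/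
inductive DL2Deriv {A : Type*} : DL2Hypersequent A → Prop where
  | init (H : DL2Hypersequent A) (p : DL2Formula A) :
      DL2Deriv (([p], [p]) :: H)
  | emp (H : DL2Hypersequent A) :
      DL2Deriv (([], []) :: H)
  | top_r (H : DL2Hypersequent A) (Γ : List (DL2Formula A)) :
      DL2Deriv ((Γ, [DL2Formula.top]) :: H)
  | ew (H : DL2Hypersequent A) (S : DL2Sequent A) :
      DL2Deriv H → DL2Deriv (S :: H)
  | ec (H : DL2Hypersequent A) (G : DL2Sequent A) :
      DL2Deriv (G :: G :: H) → DL2Deriv (G :: H)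
  | eex (H H' : DL2Hypersequent A) :
      H.Perm H' → DL2Deriv H → DL2Deriv H'
  | weak (H : DL2Hypersequent A) (Γ Γ' Δ : List (DL2Formula A)) :
      DL2Deriv ((Γ, Δ) :: H) → DL2Deriv ((Γ ++ Γ', Δ) :: H)
  | com (H : DL2Hypersequent A) (Γ₁ Γ₂ P₁ P₂ Δ Θ : List (DL2Formula A)) :
      DL2Deriv ((Γ₁ ++ P₁, Δ) :: H) → DL2Deriv ((Γ₂ ++ P₂, Θ) :: H) →
      DL2Deriv ((Γ₁ ++ Γ₂, Δ) :: (P₁ ++ P₂, Θ) :: H)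
  | lex (H : DL2Hypersequent A) (Γ₁ Γ₂ Δ : List (DL2Formula A)) (p q : DL2Formula A) :
      DL2Deriv ((Γ₁ ++ p :: q :: Γ₂, Δ) :: H) →
      DL2Deriv ((Γ₁ ++ q :: p :: Γ₂, Δ) :: H)
  | rex (H : DL2Hypersequent A) (Γ Δ₁ Δ₂ : List (DL2Formula A)) (p q : DL2Formula A) :
      DL2Deriv ((Γ, Δ₁ ++ p :: q :: Δ₂) :: H) →
      DL2Deriv ((Γ, Δ₁ ++ q :: p :: Δ₂) :: H)
  | mandL (H : DL2Hypersequent A) (Γ Δ : List (DL2Formula A)) (p q : DL2Formula A) :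
      DL2Deriv ((Γ ++ [p, q], Δ) :: H) →
      DL2Deriv ((Γ ++ [p.mand q], Δ) :: H)
  | mandR (H : DL2Hypersequent A) (Γ₀ Γ₁ Δ₀ Δ₁ : List (DL2Formula A))
      (p q : DL2Formula A) :
      DL2Deriv ((Γ₀, [p] ++ Δ₀) :: H) → DL2Deriv ((Γ₁, [q] ++ Δ₁) :: H) →
      DL2Deriv ((Γ₀ ++ Γ₁, [p.mand q] ++ Δ₀ ++ Δ₁) :: H)
  | landL (H : DL2Hypersequent A) (Γ Δ : List (DL2Formula A)) (p q : DL2Formula A) :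
      DL2Deriv ((Γ ++ [p], Δ) :: (Γ ++ [q], Δ) :: H) →
      DL2Deriv ((Γ ++ [p.land q], Δ) :: H)
  | landR (H : DL2Hypersequent A) (Γ Δ : List (DL2Formula A)) (p q : DL2Formula A) :
      DL2Deriv ((Γ, [p] ++ Δ) :: H) → DL2Deriv ((Γ, [q] ++ Δ) :: H) →
      DL2Deriv ((Γ, [p.land q] ++ Δ) :: H)
  | lorL (H : DL2Hypersequent A) (Γ Δ : List (DL2Formula A)) (p q : DL2Formula A) :
      DL2Deriv ((Γ ++ [p], Δ) :: H) → DL2Deriv ((Γ ++ [q], Δ) :: H) →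
      DL2Deriv ((Γ ++ [p.lor q], Δ) :: H)
  | lorR (H : DL2Hypersequent A) (Γ Δ : List (DL2Formula A)) (p q : DL2Formula A) :
      DL2Deriv ((Γ, [p] ++ Δ) :: (Γ, [q] ++ Δ) :: H) →
      DL2Deriv ((Γ, [p.lor q] ++ Δ) :: H)
  | impL (H : DL2Hypersequent A) (Γ Δ : List (DL2Formula A)) (p q : DL2Formula A) :
      DL2Deriv ((Γ, Δ) :: H) → DL2Deriv ((Γ ++ [q], [p] ++ Δ) :: H) →
      DL2Deriv ((Γ ++ [p.imp q], Δ) :: H)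
  | impR (H : DL2Hypersequent A) (Γ Δ : List (DL2Formula A)) (p q : DL2Formula A) :
      DL2Deriv ((Γ, Δ) :: H) → DL2Deriv ((Γ ++ [p], [q] ++ Δ) :: H) →
      DL2Deriv ((Γ, [p.imp q] ++ Δ) :: H)

lemma dl2_interp_nonpos {A : Type*} (val : A → ℝ) (hval : ∀ a, val a ≤ 0)
    (p : DL2Formula A) : DL2Formula.interp val p ≤ 0 := by
  induction p with
  | atom a => exact hval a
  | top => simp [DL2Formula.interp]
  | mand p q hp hq => simp only [DL2Formula.interp]; linarith
  | land p q hp hq => simp only [DL2Formula.interp]; exact le_trans (min_le_left _ _) hp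
  | lor p q hp hq => simp only [DL2Formula.interp]; exact max_le hp hq
  | imp p q hp hq =>
      simp only [DL2Formula.interp, neg_nonpos]
      exact le_max_right _ _

lemma dl2_sum_nonpos {A : Type*} (val : A → ℝ) (hval : ∀ a, val a ≤ 0)
    (Γ : List (DL2Formula A)) : (Γ.map (DL2Formula.interp val)).sum ≤ 0 := by
  induction Γ with
  | nil => simp
  | cons p Γ ih =>
      simp only [List.map_cons, List.sum_cons]
      have := dl2_interp_nonpos val hval p
      linarith

/-- Soundness of the hypersequent calculus for DL2: every derivable
hypersequent contains a sound sequent, for any valuation of the atoms into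
`(-∞, 0]`. -/
theorem dl2_soundness {A : Type*} (val : A → ℝ) (hval : ∀ a, val a ≤ 0)
    (H : DL2Hypersequent A) (hH : DL2Deriv H) :
    ∃ s ∈ H, DL2Sequent.Sound val s := by
  have hdef : ∀ s : DL2Sequent A, DL2Sequent.Sound val s ↔
      (s.1.map (DL2Formula.interp val)).sum ≤ (s.2.map (DL2Formula.interp val)).sum := fun s => Iff.rfl
  induction hH with
  | init H p => exact ⟨([p], [p]), by simp, by simp [DL2Sequent.Sound]⟩
  | emp H => exact ⟨([], []), by simp, by simp [DL2Sequent.Sound]⟩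
  | top_r H Γ =>
      refine ⟨(Γ, [DL2Formula.top]), by simp, ?_⟩
      simp only [DL2Sequent.Sound, List.map_cons, List.map_nil, List.sum_cons, List.sum_nil]
      simpa [DL2Formula.interp] using dl2_sum_nonpos val hval Γ
  | ew H S _ ih =>
      obtain ⟨s, hs, hsound⟩ := ih
      exact ⟨s, List.mem_cons_of_mem _ hs, hsound⟩
  | ec H G _ ih =>
      obtain ⟨s, hs, hsound⟩ := ih
      rcases List.mem_cons.1 hs with h | h
      · exact ⟨s, by simp [h], hsound⟩
      · exact ⟨s, h, hsound⟩
  | eex H H' hperm _ ih =>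
      obtain ⟨s, hs, hsound⟩ := ih
      exact ⟨s, hperm.mem_iff.1 hs, hsound⟩
  | weak H Γ Γ' Δ _ ih =>
      obtain ⟨s, hs, hsound⟩ := ih
      rcases List.mem_cons.1 hs with h | h
      · refine ⟨(Γ ++ Γ', Δ), by simp, ?_⟩
        rw [hdef] at hsound ⊢
        subst h
        simp only [List.map_append, List.sum_append] at *
        have := dl2_sum_nonpos val hval Γ'
        linarith
      · exact ⟨s, List.mem_cons_of_mem _ h, hsound⟩
  | com H Γ₁ Γ₂ P₁ P₂ Δ Θ _ _ ih1 ih2 =>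
      obtain ⟨s1, hs1, hsd1⟩ := ih1
      obtain ⟨s2, hs2, hsd2⟩ := ih2
      rcases List.mem_cons.1 hs1 with h1 | h1
      · rcases List.mem_cons.1 hs2 with h2 | h2
        · subst h1; subst h2
          rw [hdef] at hsd1 hsd2
          simp only [List.map_append, List.sum_append] at hsd1 hsd2
          by_cases hc : ((Γ₁.map (DL2Formula.interp val)).sum + (Γ₂.map (DL2Formula.interp val)).sum ≤ (Δ.map (DL2Formula.interp val)).sum)
          · refine ⟨(Γ₁ ++ Γ₂, Δ), by simp, ?_⟩
            rw [hdef]; simp only [List.map_append, List.sum_append]; exact hc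
          · refine ⟨(P₁ ++ P₂, Θ), by simp, ?_⟩
            rw [hdef]; simp only [List.map_append, List.sum_append]
            push_neg at hc
            linarith
        · exact ⟨s2, by simp [h2], hsd2⟩
      · exact ⟨s1, by simp [h1], hsd1⟩
  | lex H Γ₁ Γ₂ Δ p q _ ih =>
      obtain ⟨s, hs, hsound⟩ := ih
      rcases List.mem_cons.1 hs with h | h
      · refine ⟨(Γ₁ ++ q :: p :: Γ₂, Δ), by simp, ?_⟩
        rw [hdef] at hsound ⊢
        subst h
        simp only [List.map_append, List.sum_append, List.map_cons, List.sum_cons] at *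
        linarith
      · exact ⟨s, List.mem_cons_of_mem _ h, hsound⟩
  | rex H Γ Δ₁ Δ₂ p q _ ih =>
      obtain ⟨s, hs, hsound⟩ := ih
      rcases List.mem_cons.1 hs with h | h
      · refine ⟨(Γ, Δ₁ ++ q :: p :: Δ₂), by simp, ?_⟩
        rw [hdef] at hsound ⊢
        subst h
        simp only [List.map_append, List.sum_append, List.map_cons, List.sum_cons] at *
        linarith
      · exact ⟨s, List.mem_cons_of_mem _ h, hsound⟩
  | mandL H Γ Δ p q _ ih =>
      obtain ⟨s, hs, hsound⟩ := ih
      rcases List.mem_cons.1 hs with h | h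
      · refine ⟨(Γ ++ [p.mand q], Δ), by simp, ?_⟩
        rw [hdef] at hsound ⊢
        subst h
        simp only [List.map_append, List.sum_append, List.map_cons, List.map_nil,
          List.sum_cons, List.sum_nil, DL2Formula.interp] at *
        linarith
      · exact ⟨s, List.mem_cons_of_mem _ h, hsound⟩
  | mandR H Γ₀ Γ₁ Δ₀ Δ₁ p q _ _ ih1 ih2 =>
      obtain ⟨s1, hs1, hsd1⟩ := ih1
      obtain ⟨s2, hs2, hsd2⟩ := ih2
      rcases List.mem_cons.1 hs1 with h1 | h1
      · rcases List.mem_cons.1 hs2 with h2 | h2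
        · refine ⟨(Γ₀ ++ Γ₁, [p.mand q] ++ Δ₀ ++ Δ₁), by simp, ?_⟩
          rw [hdef] at hsd1 hsd2 ⊢
          subst h1; subst h2
          simp only [List.map_append, List.sum_append, List.map_cons, List.map_nil,
            List.sum_cons, List.sum_nil, DL2Formula.interp] at *
          linarith
        · exact ⟨s2, List.mem_cons_of_mem _ h2, hsd2⟩
      · exact ⟨s1, List.mem_cons_of_mem _ h1, hsd1⟩
  | landL H Γ Δ p q _ ih =>
      obtain ⟨s, hs, hsound⟩ := ih
      rcases List.mem_cons.1 hs with h | h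
      · refine ⟨(Γ ++ [p.land q], Δ), by simp, ?_⟩
        rw [hdef] at hsound ⊢
        subst h
        simp only [List.map_append, List.sum_append, List.map_cons, List.map_nil,
          List.sum_cons, List.sum_nil, DL2Formula.interp] at *
        have := min_le_left (DL2Formula.interp val p) (DL2Formula.interp val q)
        linarith
      · rcases List.mem_cons.1 h with h' | h'
        · refine ⟨(Γ ++ [p.land q], Δ), by simp, ?_⟩
          rw [hdef] at hsound ⊢
          subst h'
          simp only [List.map_append, List.sum_append, List.map_cons, List.map_nil,
            List.sum_cons, List.sum_nil, DL2Formula.interp] at *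
          have := min_le_right (DL2Formula.interp val p) (DL2Formula.interp val q)
          linarith
        · exact ⟨s, List.mem_cons_of_mem _ h', hsound⟩
  | landR H Γ Δ p q _ _ ih1 ih2 =>
      obtain ⟨s1, hs1, hsd1⟩ := ih1
      obtain ⟨s2, hs2, hsd2⟩ := ih2
      rcases List.mem_cons.1 hs1 with h1 | h1
      · rcases List.mem_cons.1 hs2 with h2 | h2
        · refine ⟨(Γ, [p.land q] ++ Δ), by simp, ?_⟩
          rw [hdef] at hsd1 hsd2 ⊢
          subst h1; subst h2
          simp only [List.map_append, List.sum_append, List.map_cons, List.map_nil,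
            List.sum_cons, List.sum_nil, DL2Formula.interp] at *
          rcases le_total (DL2Formula.interp val p) (DL2Formula.interp val q) with h | h
          · rw [min_eq_left h]; linarith
          · rw [min_eq_right h]; linarith
        · exact ⟨s2, List.mem_cons_of_mem _ h2, hsd2⟩
      · exact ⟨s1, List.mem_cons_of_mem _ h1, hsd1⟩
  | lorL H Γ Δ p q _ _ ih1 ih2 =>
      obtain ⟨s1, hs1, hsd1⟩ := ih1
      obtain ⟨s2, hs2, hsd2⟩ := ih2
      rcases List.mem_cons.1 hs1 with h1 | h1
      · rcases List.mem_cons.1 hs2 with h2 | h2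
        · refine ⟨(Γ ++ [p.lor q], Δ), by simp, ?_⟩
          rw [hdef] at hsd1 hsd2 ⊢
          subst h1; subst h2
          simp only [List.map_append, List.sum_append, List.map_cons, List.map_nil,
            List.sum_cons, List.sum_nil, DL2Formula.interp] at *
          rcases le_total (DL2Formula.interp val p) (DL2Formula.interp val q) with h | h
          · rw [max_eq_right h]; linarith
          · rw [max_eq_left h]; linarith
        · exact ⟨s2, List.mem_cons_of_mem _ h2, hsd2⟩
      · exact ⟨s1, List.mem_cons_of_mem _ h1, hsd1⟩
  | lorR H Γ Δ p q _ ih =>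
      obtain ⟨s, hs, hsound⟩ := ih
      rcases List.mem_cons.1 hs with h | h
      · refine ⟨(Γ, [p.lor q] ++ Δ), by simp, ?_⟩
        rw [hdef] at hsound ⊢
        subst h
        simp only [List.map_append, List.sum_append, List.map_cons, List.map_nil,
          List.sum_cons, List.sum_nil, DL2Formula.interp] at *
        have := le_max_left (DL2Formula.interp val p) (DL2Formula.interp val q)
        linarith
      · rcases List.mem_cons.1 h with h' | h'
        · refine ⟨(Γ, [p.lor q] ++ Δ), by simp, ?_⟩
          rw [hdef] at hsound ⊢
          subst h'
          simp only [List.map_append, List.sum_append, List.map_cons, List.map_nil,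
            List.sum_cons, List.sum_nil, DL2Formula.interp] at *
          have := le_max_right (DL2Formula.interp val p) (DL2Formula.interp val q)
          linarith
        · exact ⟨s, List.mem_cons_of_mem _ h', hsound⟩
  | impL H Γ Δ p q _ _ ih1 ih2 =>
      obtain ⟨s1, hs1, hsd1⟩ := ih1
      rcases List.mem_cons.1 hs1 with h1 | h1
      · refine ⟨(Γ ++ [p.imp q], Δ), by simp, ?_⟩
        rw [hdef] at hsd1 ⊢
        subst h1
        simp only [List.map_append, List.sum_append, List.map_cons, List.map_nil,
          List.sum_cons, List.sum_nil, DL2Formula.interp] at *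
        have : -max (DL2Formula.interp val p - DL2Formula.interp val q) 0 ≤ 0 := by
          simp only [neg_nonpos]; exact le_max_right _ _
        linarith
      · exact ⟨s1, List.mem_cons_of_mem _ h1, hsd1⟩
  | impR H Γ Δ p q _ _ ih1 ih2 =>
      obtain ⟨s1, hs1, hsd1⟩ := ih1
      obtain ⟨s2, hs2, hsd2⟩ := ih2
      rcases List.mem_cons.1 hs1 with h1 | h1
      · rcases List.mem_cons.1 hs2 with h2 | h2
        · refine ⟨(Γ, [p.imp q] ++ Δ), by simp, ?_⟩
          rw [hdef] at hsd1 hsd2 ⊢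
          subst h1; subst h2
          simp only [List.map_append, List.sum_append, List.map_cons, List.map_nil,
            List.sum_cons, List.sum_nil, DL2Formula.interp] at *
          rcases le_total (DL2Formula.interp val p - DL2Formula.interp val q) 0 with h | h
          · rw [max_eq_right h]; linarith
          · rw [max_eq_left h]; linarith
        · exact ⟨s2, List.mem_cons_of_mem _ h2, hsd2⟩
      · exact ⟨s1, List.mem_cons_of_mem _ h1, hsd1⟩
end
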